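/- arXiv:1002.2802 — 5 statements merged into one kernel-verified Lean document; each statement's English description precedes it below -/
import Mathlib

section
/- For any open cover 𝒰 of a Tychonov (completely regular Hausdorff) space X and any compact subset K ⊆ X, there exists a continuous pseudometric ρ on X such that for every point x ∈ K, the ρ-ball of radius 1 centered at x is contained in some member of 𝒰. -/
/-- Lemma: for any open cover `𝒰` of a Tychonov space `X` and any compact `K ⊆ X` there is a
continuous pseudometric `ρ` on `X` such that each `ρ`-ball of radius `1` centered at a point of
`K` lies in some member of `𝒰`. -/
theorem stmt0 {X : Type} [TopologicalSpace X] [T35Space X]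
    (𝒰 : Set (Set X)) (h𝒰o : ∀ U ∈ 𝒰, IsOpen U) (h𝒰c : ⋃₀ 𝒰 = Set.univ)
    (K : Set X) (hK : IsCompact K) :
    ∃ ρ : X → X → ℝ,
      (∀ x, ρ x x = 0) ∧
      (∀ x y, ρ x y = ρ y x) ∧
      (∀ x y z, ρ x z ≤ ρ x y + ρ y z) ∧
      Continuous (fun q : X × X => ρ q.1 q.2) ∧
      ∀ x ∈ K, ∃ U ∈ 𝒰, {y : X | ρ x y < 1} ⊆ U := by
  classical
  have hsel : ∀ x : K, ∃ U ∈ 𝒰, ∃ g : X → ℝ, Continuous g ∧ g (x : X) = 1 ∧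
      ∀ y, y ∉ U → g y = 0 := by
    rintro ⟨x, hx⟩
    have hxU : x ∈ ⋃₀ 𝒰 := by rw [h𝒰c]; trivial
    obtain ⟨U, hU𝒰, hxU⟩ := hxU
    obtain ⟨f, hf, hfx, hf1⟩ := CompletelyRegularSpace.completely_regular x Uᶜ
      ((h𝒰o U hU𝒰).isClosed_compl) (by simpa)
    refine ⟨U, hU𝒰, fun y => 1 - (f y : ℝ), by continuity, by simp [hfx], ?_⟩
    intro y hy
    have h1 : f y = 1 := hf1 hy
    simp [h1]
  choose U hU𝒰 g hgc hgx hg0 using hsel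
  -- open cover of K
  have hcov : K ⊆ ⋃ i : K, (g i) ⁻¹' Set.Ioi (1/2 : ℝ) := by
    intro x hx
    exact Set.mem_iUnion.2 ⟨⟨x, hx⟩, by simp [hgx ⟨x, hx⟩]; norm_num⟩
  obtain ⟨t, ht⟩ := hK.elim_finite_subcover (fun i : K => (g i) ⁻¹' Set.Ioi (1/2 : ℝ))
    (fun i => (isOpen_Ioi).preimage (hgc i)) hcov
  refine ⟨fun a b => ∑ i ∈ t, 4 * |g i a - g i b|, ?_, ?_, ?_, ?_, ?_⟩
  · intro x; simp
  · intro x y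
    refine Finset.sum_congr rfl fun i _ => ?_
    rw [abs_sub_comm]
  · intro x y z
    rw [← Finset.sum_add_distrib]
    refine Finset.sum_le_sum fun i _ => ?_
    rw [← mul_add]
    have := abs_sub_le (g i x) (g i y) (g i z)
    nlinarith
  · refine continuous_finset_sum t fun i _ => ?_
    exact continuous_const.mul (((hgc i).comp continuous_fst).sub
      ((hgc i).comp continuous_snd)).abs
  · intro x hx
    obtain ⟨i, hit, hgi⟩ : ∃ i ∈ t, g i x > 1/2 := by
      have := ht hx
      simpa using this
    refine ⟨U i, hU𝒰 i, ?_⟩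
    intro y hy
    simp only [Set.mem_setOf_eq] at hy
    by_contra hyU
    have hzero : g i y = 0 := hg0 i y hyU
    have hle : 4 * |g i x - g i y| ≤ ∑ j ∈ t, 4 * |g j x - g j y| :=
      Finset.single_le_sum (f := fun j => 4 * |g j x - g j y|) (fun j _ => by positivity) hit
    rw [hzero, sub_zero] at hle
    have : |g i x| ≥ g i x := le_abs_self _
    nlinarith [hle.trans_lt hy]
end

section
/- If in a commutative diagram of abelian groups with middle row exact, consisting of homomorphisms A₂ → A₃, i₂ : A₂ → B₂, i₃ : A₃ → B₃, B₁ → B₂ → B₃ (exact at B₂), i₁ : B₁ → C₁, i₄ : B₂ → C₂, C₁ → C₂, the images i₁(B₁) and i₃(A₃) are finitely generated, then the image of the composite i₄ ∘ i₂ : A₂ → C₂ is finitely generated. -/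
/-!
Chase `i₂(A₂)` through the middle row. Its image under `b₂` lies in `i₃(A₃)`, so it is finitely
generated (`ℤ` is Noetherian); lifting finitely many generators gives a finitely generated `K`
with `i₂(A₂) ≤ K + ker b₂ = K + b₁(B₁)`. Applying `i₄` and the second square,
`i₄ i₂(A₂) ≤ i₄(K) + c(i₁(B₁))`, a sum of two finitely generated subgroups.
-/

namespace AddSubgroup

variable {G G' : Type*} [AddCommGroup G] [AddCommGroup G']

theorem FG.of_le {H K : AddSubgroup G} (hK : K.FG) (hHK : H ≤ K) : H.FG := by
  rw [← K.toIntSubmodule_toAddSubgroup, ← Submodule.fg_iff_addSubgroup_fg] at hK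
  rw [← H.toIntSubmodule_toAddSubgroup, ← Submodule.fg_iff_addSubgroup_fg]
  exact hK.of_le (toIntSubmodule.monotone hHK)

theorem FG.map {H : AddSubgroup G} (hH : H.FG) (f : G →+ G') : (H.map f).FG := by
  classical
  obtain ⟨S, rfl⟩ := hH
  exact ⟨S.image f, by rw [Finset.coe_image, AddMonoidHom.map_closure]⟩

theorem exists_fg_le_sup_ker_of_fg_map (f : G →+ G') (H : AddSubgroup G) (hH : (H.map f).FG) :
    ∃ K : AddSubgroup G, K.FG ∧ H ≤ K ⊔ f.ker := by
  classical
  obtain ⟨S, hS⟩ := hH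
  have hS_sub : (S : Set G') ⊆ f '' H := by
    rw [← coe_map, ← hS]
    exact subset_closure
  obtain ⟨T, -, rfl⟩ := Finset.subset_set_image_iff.mp hS_sub
  refine ⟨closure T, ⟨T, rfl⟩, ?_⟩
  have hmap : (closure (T : Set G)).map f = H.map f := by
    rw [AddMonoidHom.map_closure, ← hS, Finset.coe_image]
  calc H ≤ (H.map f).comap f := le_comap_map f H
    _ = closure T ⊔ f.ker := by rw [← hmap, comap_map_eq]

end AddSubgroup

/-- In a commutative diagram of abelian groups with exact middle row `B₁ → B₂ → B₃`, if the
images of `i₁ : B₁ → C₁` and `i₃ : A₃ → B₃` are finitely generated, then so is the image of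
`i₄ ∘ i₂ : A₂ → C₂`. -/
theorem stmt1 {A₂ A₃ B₁ B₂ B₃ C₁ C₂ : Type}
    [AddCommGroup A₂] [AddCommGroup A₃] [AddCommGroup B₁] [AddCommGroup B₂]
    [AddCommGroup B₃] [AddCommGroup C₁] [AddCommGroup C₂]
    (a : A₂ →+ A₃) (i₂ : A₂ →+ B₂) (i₃ : A₃ →+ B₃)
    (b₁ : B₁ →+ B₂) (b₂ : B₂ →+ B₃) (i₁ : B₁ →+ C₁) (i₄ : B₂ →+ C₂) (c : C₁ →+ C₂)
    (hsq₁ : b₂.comp i₂ = i₃.comp a)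
    (hsq₂ : i₄.comp b₁ = c.comp i₁)
    (hexact : Function.Exact b₁ b₂)
    (h₁ : i₁.range.FG) (h₃ : i₃.range.FG) :
    (i₄.comp i₂).range.FG := by
  have hb₂ : (i₂.range.map b₂).FG := by
    refine h₃.of_le ?_
    rw [← AddMonoidHom.range_comp, hsq₁, AddMonoidHom.range_comp]
    exact AddSubgroup.map_le_range i₃ a.range
  obtain ⟨K, hK, hle⟩ := AddSubgroup.exists_fg_le_sup_ker_of_fg_map b₂ i₂.range hb₂
  rw [hexact.addMonoidHom_ker_eq] at hle
  have hcover : (i₄.comp i₂).range ≤ K.map i₄ ⊔ i₁.range.map c :=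
    calc (i₄.comp i₂).range = i₂.range.map i₄ := AddMonoidHom.range_comp i₄ i₂
      _ ≤ (K ⊔ b₁.range).map i₄ := AddSubgroup.map_mono hle
      _ = K.map i₄ ⊔ i₁.range.map c := by
        rw [AddSubgroup.map_sup, ← AddMonoidHom.range_comp, hsq₂, AddMonoidHom.range_comp]
  exact ((hK.map i₄).sup (h₁.map c)).of_le hcover
end

section
/- For nontrivial abelian groups G₀ and G₁, the tensor product G₀ ⊗ G₁ contains an element of infinite order if and only if both G₀ and G₁ contain elements of infinite order. -/
open TensorProduct

theorem not_isOfFinAddOrder_iff_forall_nsmul_ne_zero {G : Type*} [AddMonoid G] (x : G) :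
    ¬IsOfFinAddOrder x ↔ ∀ n : ℕ, 0 < n → n • x ≠ 0 := by
  simp [isOfFinAddOrder_iff_nsmul_eq_zero]

/-- `ℚ` is divisible, hence an injective `ℤ`-module, so the embedding `ℤ ≅ ℤ ∙ x → ℚ`
extends to all of `G`. -/
theorem exists_addMonoidHom_rat_ne_zero {G : Type*} [AddCommGroup G] {x : G}
    (hx : ¬IsOfFinAddOrder x) : ∃ φ : G →+ ℚ, φ x ≠ 0 := by
  obtain ⟨φ, hφ⟩ := (Module.Baer.of_divisible ℚ).extension_property_addMonoidHom
    (zmultiplesHom G x) (injective_zsmul_iff_not_isOfFinAddOrder.mpr hx) (Int.castAddHom ℚ)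
  have hφx : φ x = 1 := by simpa using DFunLike.congr_fun hφ 1
  exact ⟨φ, hφx ▸ one_ne_zero⟩

section TensorProduct

variable {A B : Type*} [AddCommGroup A] [AddCommGroup B]

theorem IsAddTorsion.tensorProduct_of_forall_tmul
    (h : ∀ (a : A) (b : B), IsOfFinAddOrder (a ⊗ₜ[ℤ] b)) : IsAddTorsion (A ⊗[ℤ] B) := by
  intro z
  induction z using TensorProduct.induction_on with
  | zero => exact IsOfFinAddOrder.zero
  | tmul a b => exact h a b
  | add u v hu hv => exact hu.add hv

theorem IsAddTorsion.tensorProduct_left (hA : IsAddTorsion A) :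
    IsAddTorsion (A ⊗[ℤ] B) :=
  .tensorProduct_of_forall_tmul fun a b ↦
    ((TensorProduct.mk ℤ A B).flip b).toAddMonoidHom.isOfFinAddOrder (hA a)

theorem IsAddTorsion.tensorProduct_right (hB : IsAddTorsion B) :
    IsAddTorsion (A ⊗[ℤ] B) :=
  .tensorProduct_of_forall_tmul fun a b ↦
    (TensorProduct.mk ℤ A B a).toAddMonoidHom.isOfFinAddOrder (hB b)

theorem not_isOfFinAddOrder_tmul {a : A} {b : B} (ha : ¬IsOfFinAddOrder a)
    (hb : ¬IsOfFinAddOrder b) : ¬IsOfFinAddOrder (a ⊗ₜ[ℤ] b) := by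
  obtain ⟨φ, hφ⟩ := exists_addMonoidHom_rat_ne_zero ha
  obtain ⟨ψ, hψ⟩ := exists_addMonoidHom_rat_ne_zero hb
  let F : A ⊗[ℤ] B →ₗ[ℤ] ℚ := LinearMap.mul' ℤ ℚ ∘ₗ map φ.toIntLinearMap ψ.toIntLinearMap
  have hF : F (a ⊗ₜ b) = φ a * ψ b := rfl
  intro hab
  have : φ a * ψ b = 0 := hF ▸ (F.toAddMonoidHom.isOfFinAddOrder hab).eq_zero'
  exact mul_ne_zero hφ hψ this

end TensorProduct

theorem stmt2_general (G₀ G₁ : Type) [AddCommGroup G₀] [AddCommGroup G₁] :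
    (∃ x : G₀ ⊗[ℤ] G₁, ∀ n : ℕ, 0 < n → n • x ≠ 0) ↔
      ((∃ x : G₀, ∀ n : ℕ, 0 < n → n • x ≠ 0) ∧
       (∃ y : G₁, ∀ n : ℕ, 0 < n → n • y ≠ 0)) := by
  simp only [← not_isOfFinAddOrder_iff_forall_nsmul_ne_zero]
  constructor
  · rintro ⟨z, hz⟩
    constructor <;> by_contra! h
    · exact hz (IsAddTorsion.tensorProduct_left h z)
    · exact hz (IsAddTorsion.tensorProduct_right h z)
  · rintro ⟨⟨x, hx⟩, ⟨y, hy⟩⟩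
    exact ⟨x ⊗ₜ y, not_isOfFinAddOrder_tmul hx hy⟩

/-- For nontrivial abelian groups `G₀`, `G₁`, the tensor product `G₀ ⊗ G₁` contains an element
of infinite order iff both `G₀` and `G₁` contain elements of infinite order. -/
theorem stmt2 (G₀ G₁ : Type) [AddCommGroup G₀] [AddCommGroup G₁]
    [Nontrivial G₀] [Nontrivial G₁] :
    (∃ x : G₀ ⊗[ℤ] G₁, ∀ n : ℕ, 0 < n → n • x ≠ 0) ↔
      ((∃ x : G₀, ∀ n : ℕ, 0 < n → n • x ≠ 0) ∧
       (∃ y : G₁, ∀ n : ℕ, 0 < n → n • y ≠ 0)) :=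
  stmt2_general G₀ G₁
end

section
/- If A and B are closed subsets of a topological space X such that for every open U ⊆ X and every k ≤ n the singular homology groups H_k(U, U \ A; G) and H_k(U, U \ B; G) vanish, then for every open U ⊆ X and every k ≤ n the group H_k(U, U \ (A ∪ B); G) vanishes. -/
open CategoryTheory CategoryTheory.Limits AlgebraicTopology

/-- The functor sending a type `S` to the free `G`-coefficient group `S →₀ G`. -/
noncomputable def coeffFunctor (G : Type) [AddCommGroup G] : Type ⥤ AddCommGrpCat where
  obj S := AddCommGrpCat.of (S →₀ G)
  map f := AddCommGrpCat.ofHom (Finsupp.mapDomain.addMonoidHom f)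
  map_id S := by ext; simp [Finsupp.mapDomain_single]
  map_comp f g := by ext; simp [Finsupp.mapDomain_single]

/-- The singular chain complex of `X` with coefficients in `G`. -/
noncomputable def singularChains (G : Type) [AddCommGroup G] (X : Type) [TopologicalSpace X] :
    ChainComplex AddCommGrpCat ℕ :=
  (alternatingFaceMapComplex AddCommGrpCat).obj
    (TopCat.toSSet.obj (TopCat.of X) ⋙ coeffFunctor G)

/-- The chain map induced by a continuous map. -/
noncomputable def singularChainsMap (G : Type) [AddCommGroup G] {X Y : Type}
    [TopologicalSpace X] [TopologicalSpace Y] (f : C(X, Y)) :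
    singularChains G X ⟶ singularChains G Y :=
  (alternatingFaceMapComplex AddCommGrpCat).map
    (Functor.whiskerRight (TopCat.toSSet.map (TopCat.ofHom f : TopCat.of X ⟶ TopCat.of Y)) (coeffFunctor G))

lemma singularChainsMap_comp (G : Type) [AddCommGroup G] {X Y Z : Type}
    [TopologicalSpace X] [TopologicalSpace Y] [TopologicalSpace Z] (f : C(X, Y)) (g : C(Y, Z)) :
    singularChainsMap G (g.comp f) = singularChainsMap G f ≫ singularChainsMap G g := by
  unfold singularChainsMap
  first
    | (erw [← Functor.map_comp, ← Functor.whiskerRight_comp, ← Functor.map_comp]; rfl)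
    | (rw [show TopCat.ofHom (g.comp f) = TopCat.ofHom f ≫ TopCat.ofHom g from rfl,
          Functor.map_comp, Functor.whiskerRight_comp]; exact Functor.map_comp _ _ _)

/-- Relative singular homology `H_k(U, U \ A; G)` of the pair of subspaces `(U, U \ A)` of `X`,
defined as the homology of the cokernel of the chain map induced by the inclusion
`U \ A ⊆ U`. -/
noncomputable def relHomology (G : Type) [AddCommGroup G] {X : Type} [TopologicalSpace X]
    (U A : Set X) (k : ℕ) : AddCommGrpCat :=
  (cokernel (singularChainsMap G
    (⟨Set.inclusion (Set.diff_subset : U \ A ⊆ U), continuous_inclusion _⟩ :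
      C(↥(U \ A), ↥U)))).homology k

/-- `A` is a `G`-homological `Z_n`-set in `X` : it is closed and `H_k(U, U \ A; G) = 0`
for all open `U ⊆ X` and all `k ≤ n`. -/
def IsHomologicalZSet (G : Type) [AddCommGroup G] {X : Type} [TopologicalSpace X]
    (n : ℕ) (A : Set X) : Prop :=
  IsClosed A ∧ ∀ U : Set X, IsOpen U → ∀ k : ℕ, k ≤ n → Subsingleton (relHomology G U A k)

/-! For open `U` and closed `A`, the set `U \ A` is open and `U \ (A ∪ B) = (U \ A) \ B`, so
`U \ (A ∪ B) ⊆ U \ A ⊆ U` is a triple of subspaces. Singular chains of subspaces inject, so the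
quotients `C(U \ A)/C(U \ (A ∪ B)) → C(U)/C(U \ (A ∪ B)) → C(U)/C(U \ A)` form a short exact
sequence of chain complexes, and the long exact homology sequence of this triple sandwiches
`H_k(U, U \ (A ∪ B))` between `H_k(U \ A, (U \ A) \ B) = 0` and `H_k(U, U \ A) = 0`. -/

namespace CategoryTheory.Abelian

variable {C : Type*} [Category C] [Abelian C]

lemma shortExact_cokernel_comp {X Y Z : C} (g : X ⟶ Y) (h : Y ⟶ Z) [Mono h] :
    (ShortComplex.mk (cokernel.map g (g ≫ h) (𝟙 X) h (by simp))
      (cokernel.desc (g ≫ h) (cokernel.π h) (by simp))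
      (by rw [← cancel_epi (cokernel.π g)]; simp)).ShortExact where
  mono_f := mono_cokernel_map_of_isPullback
    (IsPullback.of_vert_isIso_mono (fst := g) (snd := 𝟙 X) (f := h) ⟨(Category.id_comp _).symm⟩)
  epi_g := epi_of_epi_fac (cokernel.π_desc _ _ _)
  exact := by
    rw [ShortComplex.exact_iff_exact_up_to_refinements]
    intro A z hz
    obtain ⟨A₁, π₁, _, y, hy⟩ := surjective_up_to_refinements_of_epi (cokernel.π (g ≫ h)) z
    obtain ⟨A₂, π₂, _, x, hx⟩ := (ShortComplex.exact_cokernel h).exact_up_to_refinements y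
      (by simpa [hz] using (hy =≫ cokernel.desc (g ≫ h) (cokernel.π h) (by simp)).symm)
    exact ⟨A₂, π₂ ≫ π₁, inferInstance, x ≫ cokernel.π g, by simp [hy, reassoc_of% hx]⟩

lemma isZero_homology_cokernel_comp {ι : Type*} {c : ComplexShape ι}
    {K L M : HomologicalComplex C c} (g : K ⟶ L) (h : L ⟶ M) [Mono h] (i : ι)
    (hg : IsZero ((cokernel g).homology i)) (hh : IsZero ((cokernel h).homology i)) :
    IsZero ((cokernel (g ≫ h)).homology i) :=
  ((shortExact_cokernel_comp g h).homology_exact₂ i).isZero_X₂ (hg.eq_of_src _ _)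
    (hh.eq_of_tgt _ _)

end CategoryTheory.Abelian

lemma mono_singularChainsMap (G : Type) [AddCommGroup G] {X Y : Type} [TopologicalSpace X]
    [TopologicalSpace Y] {f : C(X, Y)} (hf : Function.Injective f) :
    Mono (singularChainsMap G f) := by
  have : Mono (TopCat.ofHom f) := (TopCat.mono_iff_injective (TopCat.ofHom f)).2 hf
  refine HomologicalComplex.mono_of_mono_f _ fun _ ↦ ?_
  rw [AddCommGrpCat.mono_iff_injective]
  -- `TopCat.toSSet` is a right adjoint, so it preserves monos, and these are levelwise injective.
  exact Finsupp.mapDomain_injective ((mono_iff_injective _).1 inferInstance)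

section PairHomology

variable (G : Type) [AddCommGroup G] {X : Type} [TopologicalSpace X]

noncomputable def pairHomology {S U : Set X} (h : S ⊆ U) (k : ℕ) : AddCommGrpCat :=
  (cokernel (singularChainsMap G ⟨Set.inclusion h, continuous_inclusion h⟩)).homology k

variable {G}

lemma pairHomology_congr {S S' U : Set X} (h : S ⊆ U) (h' : S' ⊆ U) (e : S = S') {k : ℕ} :
    pairHomology G h k = pairHomology G h' k := by
  subst e
  rfl

lemma subsingleton_pairHomology_trans {S T U : Set X} (hST : S ⊆ T) (hTU : T ⊆ U) {k : ℕ}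
    (hS : Subsingleton (pairHomology G hST k)) (hT : Subsingleton (pairHomology G hTU k)) :
    Subsingleton (pairHomology G (hST.trans hTU) k) := by
  have : Mono (singularChainsMap G ⟨Set.inclusion hTU, continuous_inclusion hTU⟩) :=
    mono_singularChainsMap G (Set.inclusion_injective hTU)
  rw [← AddCommGrpCat.isZero_iff_subsingleton] at hS hT ⊢
  have h := Abelian.isZero_homology_cokernel_comp _ _ k hS hT
  rwa [← singularChainsMap_comp] at h

lemma subsingleton_relHomology_union {U A B : Set X} {k : ℕ}
    (hA : Subsingleton (relHomology G U A k)) (hB : Subsingleton (relHomology G (U \ A) B k)) :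
    Subsingleton (relHomology G U (A ∪ B) k) := by
  convert subsingleton_pairHomology_trans Set.sdiff_subset Set.sdiff_subset hB hA using 2
  exact pairHomology_congr _ _ Set.sdiff_sdiff.symm

end PairHomology

theorem stmt4_general (G : Type) [AddCommGroup G] {X : Type} [TopologicalSpace X] (n : ℕ)
    (A B : Set X) (hA : IsClosed A)
    (hAv : ∀ U : Set X, IsOpen U → ∀ k : ℕ, k ≤ n → Subsingleton (relHomology G U A k))
    (hBv : ∀ U : Set X, IsOpen U → ∀ k : ℕ, k ≤ n → Subsingleton (relHomology G U B k)) :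
    ∀ U : Set X, IsOpen U → ∀ k : ℕ, k ≤ n → Subsingleton (relHomology G U (A ∪ B) k) :=
  fun U hU k hk ↦ subsingleton_relHomology_union (hAv U hU k hk) (hBv _ (hU.sdiff hA) k hk)

/-- The union of two `G`-homological `Z_n`-sets is a `G`-homological `Z_n`-set. -/
theorem stmt4 (G : Type) [AddCommGroup G] {X : Type} [TopologicalSpace X] (n : ℕ)
    (A B : Set X) (hA : IsClosed A) (hB : IsClosed B)
    (hAv : ∀ U : Set X, IsOpen U → ∀ k : ℕ, k ≤ n → Subsingleton (relHomology G U A k))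
    (hBv : ∀ U : Set X, IsOpen U → ∀ k : ℕ, k ≤ n → Subsingleton (relHomology G U B k)) :
    ∀ U : Set X, IsOpen U → ∀ k : ℕ, k ≤ n → Subsingleton (relHomology G U (A ∪ B) k) :=
  stmt4_general G n A B hA hAv hBv
end

section
/- Let X be a metrizable separable space and n a natural number. The set of all Z_n-points of X is a G_δ subset of X. -/
/-- In a metrizable separable space, the set of `Z_n`-points is a `G_δ`-set. A point `x` is a
`Z_n`-point if every map `[0,1]^n → X` can be uniformly approximated by maps missing `x`. -/
theorem stmt18 {X : Type} [MetricSpace X] [TopologicalSpace.SeparableSpace X] (n : ℕ) :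
    IsGδ {x : X | ∀ ε : ℝ, 0 < ε → ∀ f : C((Fin n → unitInterval), X),
      ∃ g : C((Fin n → unitInterval), X), (∀ z, g z ≠ x) ∧ ∀ z, dist (f z) (g z) < ε} := by
  haveI : SecondCountableTopology X := UniformSpace.secondCountable_of_separable X
  obtain ⟨D, hDc, hDd⟩ :=
    TopologicalSpace.exists_countable_dense C((Fin n → unitInterval), X)
  -- the open "approximately avoidable" sets
  set U : C((Fin n → unitInterval), X) → ℝ → Set X := fun f ε =>
    ⋃ g ∈ {g : C((Fin n → unitInterval), X) | ∀ z, dist (f z) (g z) < ε},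
      (Set.range g)ᶜ with hU
  have hUopen : ∀ f ε, IsOpen (U f ε) := by
    intro f ε
    refine isOpen_biUnion fun g _ => ?_
    exact (isCompact_range g.continuous).isClosed.isOpen_compl
  have hmem : ∀ f ε x, x ∈ U f ε ↔
      ∃ g : C((Fin n → unitInterval), X), (∀ z, g z ≠ x) ∧ ∀ z, dist (f z) (g z) < ε := by
    intro f ε x
    simp only [hU, Set.mem_iUnion, Set.mem_compl_iff, Set.mem_range, Set.mem_setOf_eq]
    constructor
    · rintro ⟨g, hg, hx⟩
      exact ⟨g, fun z hz => hx ⟨z, hz⟩, hg⟩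
    · rintro ⟨g, hgx, hg⟩
      exact ⟨g, hg, fun ⟨z, hz⟩ => hgx z hz⟩
  have key : {x : X | ∀ ε : ℝ, 0 < ε → ∀ f : C((Fin n → unitInterval), X),
      ∃ g : C((Fin n → unitInterval), X), (∀ z, g z ≠ x) ∧ ∀ z, dist (f z) (g z) < ε}
      = ⋂ (k : ℕ), ⋂ f ∈ D, U f (1 / (k + 1)) := by
    ext x
    simp only [Set.mem_setOf_eq, Set.mem_iInter]
    constructor
    · intro hx k f _
      exact (hmem f _ x).2 (hx _ (by positivity) f)
    · intro hx ε hε f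
      obtain ⟨k, hk⟩ := exists_nat_gt (3 / ε)
      have hk1 : (0:ℝ) < (k:ℝ) + 1 := by positivity
      have hkε : 1 / ((k:ℝ) + 1) < ε / 3 := by
        rw [div_lt_div_iff₀ hk1 (by norm_num : (0:ℝ) < 3)]
        have : 3 / ε < (k:ℝ) + 1 := lt_of_lt_of_le hk (by linarith [Nat.cast_nonneg (α := ℝ) k])
        calc (1:ℝ) * 3 = 3 := by ring
        _ = (3 / ε) * ε := by field_simp
        _ < ((k:ℝ) + 1) * ε := by
            exact mul_lt_mul_of_pos_right this hε
        _ = ε * ((k:ℝ) + 1) := by ring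
      -- pick f' ∈ D close to f
      obtain ⟨f', hf'ball, hf'D'⟩ := Metric.dense_iff.1 hDd f (ε / 3) (by positivity)
      have hdist : dist f f' < ε / 3 := by
        rw [dist_comm]; exact Metric.mem_ball.1 hf'ball
      obtain ⟨g, hgx, hg⟩ := (hmem f' _ x).1 (hx k f' hf'D')
      refine ⟨g, hgx, fun z => ?_⟩
      have h1 : dist (f z) (f' z) ≤ dist f f' := ContinuousMap.dist_apply_le_dist z
      calc dist (f z) (g z) ≤ dist (f z) (f' z) + dist (f' z) (g z) := dist_triangle _ _ _
        _ < ε / 3 + 1 / ((k:ℝ) + 1) := by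
            exact add_lt_add (h1.trans_lt hdist) (hg z)
        _ < ε / 3 + ε / 3 := by linarith
        _ ≤ ε := by linarith
  rw [key]
  exact .iInter fun k => .biInter hDc fun f _ => (hUopen f _).isGδ
end
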